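/- The barred patterns bar1bar243 and bar132bar4 are des-Wilf equivalent: for all n, ∑_{σ ∈ Av_n(bar1bar243)} q^{des σ} = ∑_{σ ∈ Av_n(bar132bar4)} q^{des σ}. -/

import Mathlib

open Polynomial

def des {n : ℕ} (σ : Equiv.Perm (Fin n)) : ℕ :=
  (Finset.univ.filter (fun i : Fin n =>
    ∃ h : (i : ℕ) + 1 < n, σ ⟨(i : ℕ) + 1, h⟩ < σ i)).card

def avoidsBar1243 {n : ℕ} (σ : Equiv.Perm (Fin n)) : Prop :=
  ∀ i j : Fin n, i < j → σ j < σ i →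
    ∃ k l : Fin n, k < l ∧ l < i ∧ σ k < σ l ∧ σ l < σ j

def avoidsBar1324 {n : ℕ} (σ : Equiv.Perm (Fin n)) : Prop :=
  ∀ i j : Fin n, i < j → σ j < σ i →
    ∃ k l : Fin n, k < i ∧ j < l ∧ σ k < σ j ∧ σ i < σ l

instance {n : ℕ} : DecidablePred (avoidsBar1243 (n := n)) := fun σ => by
  unfold avoidsBar1243; apply Fintype.decidableForallFintype

instance {n : ℕ} : DecidablePred (avoidsBar1324 (n := n)) := fun σ => by
  unfold avoidsBar1324; apply Fintype.decidableForallFintype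

/-!
For `n ≥ 2` both classes are cut out by fixed points: `σ` avoids `bar1bar243` iff it fixes the
first two positions, and avoids `bar132bar4` iff it fixes the first and the last position.
Conjugating by the rotation `x ↦ x + 1` (mod `n`), i.e. passing to `τ x = σ (x + 1) - 1`, maps
the first class bijectively onto the second, and when `σ` fixes `0` the descent set of `τ` is that
of `σ` shifted down by one.
-/

open Finset

theorem Fin.sub_one_lt_sub_one_iff {n : ℕ} {a b : Fin (n + 1)} (ha : a ≠ 0) (hb : b ≠ 0) :
    a - 1 < b - 1 ↔ a < b := by
  rw [Fin.lt_def, Fin.lt_def, Fin.coe_sub_one, if_neg ha, Fin.coe_sub_one, if_neg hb]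
  have := Fin.pos_of_ne_zero ha
  have := Fin.pos_of_ne_zero hb
  omega

theorem Fin.add_one_ne_zero_of_ne_last {n : ℕ} {i : Fin (n + 1)} (hi : i ≠ Fin.last n) :
    i + 1 ≠ 0 :=
  fun h => hi (add_right_cancel (h.trans (Fin.last_add_one n).symm))

theorem Equiv.Perm.conj_apply_eq_self_iff {α : Type*} (π σ : Equiv.Perm α) (x : α) :
    (π⁻¹ * σ * π) x = x ↔ σ (π x) = π x := by
  rw [Equiv.Perm.mul_apply, Equiv.Perm.mul_apply, Equiv.Perm.inv_eq_iff_eq]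

theorem finRotate_inv_mul_mul_apply {n : ℕ} (σ : Equiv.Perm (Fin (n + 1))) (x : Fin (n + 1)) :
    ((finRotate (n + 1))⁻¹ * σ * finRotate (n + 1)) x = σ (x + 1) - 1 := by
  rw [Equiv.Perm.mul_apply, Equiv.Perm.mul_apply, Equiv.Perm.inv_eq_iff_eq, finRotate_apply,
    finRotate_apply, sub_add_cancel]

theorem des_eq_card_filter {m : ℕ} (σ : Equiv.Perm (Fin (m + 1))) :
    des σ = #{i | i ≠ Fin.last m ∧ σ (i + 1) < σ i} := by
  refine congrArg card (filter_congr fun i _ => ?_)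
  constructor
  · rintro ⟨hi, hlt⟩
    have hlast : i < Fin.last m := Fin.lt_def.2 (by simp only [Fin.val_last]; omega)
    refine ⟨hlast.ne, ?_⟩
    rwa [show i + 1 = ⟨i + 1, hi⟩ from Fin.ext (Fin.val_add_one_of_lt hlast)]
  · rintro ⟨hi, hlt⟩
    have hlast : i < Fin.last m := lt_of_le_of_ne (Fin.le_last i) hi
    have hval := Fin.val_add_one_of_lt hlast
    exact ⟨hval ▸ (i + 1).isLt, by rwa [show i + 1 = ⟨i + 1, _⟩ from Fin.ext hval] at hlt⟩

theorem des_finRotate_inv_mul_mul {m : ℕ} (σ : Equiv.Perm (Fin (m + 2))) (h0 : σ 0 = 0) :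
    des ((finRotate (m + 2))⁻¹ * σ * finRotate (m + 2)) = des σ := by
  rw [des_eq_card_filter, des_eq_card_filter]
  refine card_equiv (Equiv.addRight 1) fun i => ?_
  simp only [mem_filter, mem_univ, true_and, Equiv.coe_addRight, finRotate_inv_mul_mul_apply]
  by_cases hi : i = Fin.last _
  · simp [hi, h0]
  by_cases hi' : i + 1 = Fin.last _
  · have : σ (i + 1 + 1) - 1 = Fin.last _ := by
      rw [hi', Fin.last_add_one, h0, sub_eq_iff_eq_add, Fin.last_add_one]
    rw [this, hi']
    simp only [ne_eq, not_true_eq_false, false_and, iff_false, not_and]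
    exact fun _ => not_lt.2 (Fin.le_last _)
  have hσ : ∀ {x}, x ≠ 0 → σ x ≠ 0 := fun hx => by rwa [Ne, σ.injective.eq_iff' h0]
  rw [Fin.sub_one_lt_sub_one_iff (hσ (Fin.add_one_ne_zero_of_ne_last hi'))
    (hσ (Fin.add_one_ne_zero_of_ne_last hi))]
  simp only [ne_eq, hi, hi', not_false_eq_true, true_and]

theorem avoidsBar1243_iff {m : ℕ} (σ : Equiv.Perm (Fin (m + 2))) :
    avoidsBar1243 σ ↔ σ 0 = 0 ∧ σ 1 = 1 := by
  constructor
  · intro h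
    have hmin : ∀ i j : Fin (m + 2), i ≤ j → (i : ℕ) < 2 → σ i ≤ σ j := by
      intro i j hij hi
      by_contra! hji
      obtain ⟨k, l, hkl, hli, -, -⟩ := h i j (lt_of_le_of_ne hij (by rintro rfl; simp at hji)) hji
      simp only [Fin.lt_def] at hkl hli
      omega
    have h0 : σ 0 = 0 := by
      simpa using hmin 0 (σ.symm 0) (Fin.zero_le _) (by simp)
    refine ⟨h0, ?_⟩
    obtain ⟨j, hj⟩ := σ.surjective 1
    have hj0 := σ.injective.eq_iff' (a := j) h0
    have h10 := σ.injective.eq_iff' (a := 1) h0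
    have := hmin 1 j
    simp only [Fin.le_def, Fin.ext_iff, Fin.val_zero, Fin.val_one, hj] at *
    omega
  · rintro ⟨h0, h1⟩ i j hij hji
    have e0 := fun x => σ.injective.eq_iff' (a := x) h0
    have e1 := fun x => σ.injective.eq_iff' (a := x) h1
    have := e0 i; have := e0 j; have := e1 i; have := e1 j
    refine ⟨0, 1, ?_, ?_, ?_, ?_⟩ <;>
      simp only [Fin.lt_def, Fin.ext_iff, Fin.val_zero, Fin.val_one, h0, h1] at * <;> omega

theorem avoidsBar1324_iff {m : ℕ} (σ : Equiv.Perm (Fin (m + 2))) :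
    avoidsBar1324 σ ↔ σ 0 = 0 ∧ σ (Fin.last _) = Fin.last _ := by
  constructor
  · intro h
    have hmin : ∀ j, σ 0 ≤ σ j := by
      intro j
      by_contra! hj
      obtain ⟨k, -, hk, -⟩ := h 0 j (lt_of_le_of_ne (Fin.zero_le j) (by rintro rfl; simp at hj)) hj
      exact Fin.not_lt_zero k hk
    have hmax : ∀ i, σ i ≤ σ (Fin.last _) := by
      intro i
      by_contra! hi
      obtain ⟨-, l, -, hl, -⟩ := h i _ (lt_of_le_of_ne (Fin.le_last i) (by rintro rfl; simp at hi)) hi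
      exact not_lt_of_ge (Fin.le_last l) hl
    exact ⟨by simpa using hmin (σ.symm 0), by simpa using hmax (σ.symm (Fin.last _))⟩
  · rintro ⟨h0, hl⟩ i j hij hji
    have e0 := fun x => σ.injective.eq_iff' (a := x) h0
    have el := fun x => σ.injective.eq_iff' (a := x) hl
    have := e0 i; have := e0 j; have := el i; have := el j
    refine ⟨0, Fin.last _, ?_, ?_, ?_, ?_⟩ <;>
      simp only [Fin.lt_def, Fin.ext_iff, Fin.val_zero, Fin.val_last, h0, hl] at * <;> omega

/-- The barred patterns `bar1 bar2 4 3` and `bar1 3 2 bar4` are des-Wilf equivalent. -/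
theorem desWilf_bar1243_bar1324 :
    ∀ n : ℕ,
      ∑ σ ∈ Finset.univ.filter (fun σ : Equiv.Perm (Fin n) => avoidsBar1243 σ),
          (X : Polynomial ℤ) ^ des σ =
        ∑ σ ∈ Finset.univ.filter (fun σ : Equiv.Perm (Fin n) => avoidsBar1324 σ),
          (X : Polynomial ℤ) ^ des σ := by
  rintro (_ | _ | m)
  · rfl
  · rfl
  refine sum_equiv (MulAut.conj (finRotate (m + 2))⁻¹).toEquiv (fun σ => ?_) (fun σ hσ => ?_)
  · simp only [mem_filter, mem_univ, true_and, avoidsBar1243_iff, avoidsBar1324_iff,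
      MulEquiv.toEquiv_eq_coe, MulEquiv.coe_toEquiv, MulAut.conj_apply, inv_inv,
      Equiv.Perm.conj_apply_eq_self_iff, finRotate_apply, Fin.last_add_one, zero_add]
    exact and_comm
  · rw [MulEquiv.toEquiv_eq_coe, MulEquiv.coe_toEquiv, MulAut.conj_apply, inv_inv,
      des_finRotate_inv_mul_mul σ ((avoidsBar1243_iff σ).1 (mem_filter.1 hσ).2).1]
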